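/- Suppose in addition that λ > 0 with GᵀG ⪰ λI (positive semidefinite ordering on ℝ^{m×m}), that κ_{∇c} > 0 with ‖G‖₂ ≤ κ_{∇c} (spectral norm), and that κ_c > 0 with ‖b‖ ≤ κ_c. Let (u,w) be the unique optimal solution of subproblem (V) and v := u + Gw. Then ‖v‖ ≤ √(4κ_{∇c}²/λ² + 1/μ) · κ_c. -/

import Mathlib

open Matrix

/-- Euclidean norm of a vector in `ℝᵏ` (represented as `Fin k → ℝ`). -/
noncomputable def nrm2 {k : ℕ} (a : Fin k → ℝ) : ℝ := Real.sqrt (∑ i, (a i) ^ 2)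

/-- Feasibility for subproblem (V): `Gᵀu = 0` and `x + u + Gw ≥ 0`. -/
def feasV {n m : ℕ} (G : Matrix (Fin n) (Fin m) ℝ) (x : Fin n → ℝ)
    (p : (Fin n → ℝ) × (Fin m → ℝ)) : Prop :=
  Gᵀ *ᵥ p.1 = 0 ∧ 0 ≤ x + p.1 + G *ᵥ p.2

/-- Objective of subproblem (V): `(1/2)‖b + GᵀG w‖² + (1/2)μ‖u‖²`. -/
noncomputable def objV {n m : ℕ} (G : Matrix (Fin n) (Fin m) ℝ) (b : Fin m → ℝ) (μ : ℝ)
    (p : (Fin n → ℝ) × (Fin m → ℝ)) : ℝ :=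
  (1 / 2) * nrm2 (b + Gᵀ *ᵥ (G *ᵥ p.2)) ^ 2 + (1 / 2) * μ * nrm2 p.1 ^ 2


lemma nrm2_eq_norm {k : ℕ} (a : Fin k → ℝ) :
    nrm2 a = ‖(WithLp.equiv 2 (Fin k → ℝ)).symm a‖ := by
  simp [nrm2, EuclideanSpace.norm_eq, Real.norm_eq_abs, sq_abs]

lemma nrm2_sq {k : ℕ} (a : Fin k → ℝ) : nrm2 a ^ 2 = ∑ i, (a i) ^ 2 :=
  Real.sq_sqrt (Finset.sum_nonneg fun _ _ => sq_nonneg _)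

lemma nrm2_nonneg {k : ℕ} (a : Fin k → ℝ) : 0 ≤ nrm2 a := Real.sqrt_nonneg _

lemma nrm2_add_le {k : ℕ} (a b : Fin k → ℝ) : nrm2 (a + b) ≤ nrm2 a + nrm2 b := by
  rw [nrm2_eq_norm, nrm2_eq_norm, nrm2_eq_norm]
  exact norm_add_le _ _

lemma nrm2_neg {k : ℕ} (a : Fin k → ℝ) : nrm2 (-a) = nrm2 a := by
  simp [nrm2]

lemma dot_le_nrm2 {k : ℕ} (a b : Fin k → ℝ) : a ⬝ᵥ b ≤ nrm2 a * nrm2 b := by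
  have h := real_inner_le_norm ((WithLp.equiv 2 (Fin k → ℝ)).symm a)
    ((WithLp.equiv 2 (Fin k → ℝ)).symm b)
  rw [← nrm2_eq_norm, ← nrm2_eq_norm] at h
  simpa [PiLp.inner_apply, dotProduct, mul_comm] using h


/-- Under `GᵀG ⪰ λI`, `‖G‖₂ ≤ κ∇c`, and `‖b‖ ≤ κc`, the optimal solution of
subproblem (V) with `v := u + Gw` satisfies `‖v‖ ≤ √(4κ∇c²/λ² + 1/μ)·κc`. -/
theorem normal_direction_norm_bound
    {n m : ℕ} (G : Matrix (Fin n) (Fin m) ℝ) (b : Fin m → ℝ)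
    (x : Fin n → ℝ) (μ : ℝ) (hx : 0 ≤ x) (hμ : 0 < μ)
    (hrank : Function.Injective G.mulVec)
    (lam : ℝ) (hlam : 0 < lam)
    (hGG : (Gᵀ * G - lam • (1 : Matrix (Fin m) (Fin m) ℝ)).PosSemidef)
    (κgc : ℝ) (hκgc : 0 < κgc) (hGnorm : ∀ z : Fin m → ℝ, nrm2 (G *ᵥ z) ≤ κgc * nrm2 z)
    (κc : ℝ) (hκc : 0 < κc) (hb : nrm2 b ≤ κc)
    (u : Fin n → ℝ) (w : Fin m → ℝ)
    (hfeas : feasV G x (u, w))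
    (hopt : ∀ q, feasV G x q → objV G b μ (u, w) ≤ objV G b μ q) :
    nrm2 (u + G *ᵥ w) ≤ Real.sqrt (4 * κgc ^ 2 / lam ^ 2 + 1 / μ) * κc := by
  have hfeas0 : feasV G x (0, 0) := by
    constructor
    · simp [Matrix.mulVec_zero]
    · simpa [Matrix.mulVec_zero] using hx
  have hopt0 := hopt (0, 0) hfeas0
  have hn0 : nrm2 (0 : Fin n → ℝ) = 0 := by simp [nrm2]
  rw [objV, objV] at hopt0
  simp only [Matrix.mulVec_zero, add_zero, hn0] at hopt0
  have hbnn := nrm2_nonneg b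
  have hunn := nrm2_nonneg u
  have hu2 : μ * nrm2 u ^ 2 ≤ nrm2 b ^ 2 := by
    nlinarith [sq_nonneg (nrm2 (b + Gᵀ *ᵥ G *ᵥ w))]
  have hbw : nrm2 (b + Gᵀ *ᵥ (G *ᵥ w)) ≤ nrm2 b := by
    have h2 : nrm2 (b + Gᵀ *ᵥ (G *ᵥ w)) ^ 2 ≤ nrm2 b ^ 2 := by
      nlinarith [mul_nonneg hμ.le (sq_nonneg (nrm2 u))]
    exact (pow_le_pow_iff_left₀ (nrm2_nonneg _) hbnn two_ne_zero).mp h2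
  have hGGw : nrm2 (Gᵀ *ᵥ (G *ᵥ w)) ≤ 2 * nrm2 b := by
    have heq : Gᵀ *ᵥ (G *ᵥ w) = (b + Gᵀ *ᵥ (G *ᵥ w)) + (-b) := by abel
    calc nrm2 (Gᵀ *ᵥ (G *ᵥ w)) = nrm2 ((b + Gᵀ *ᵥ (G *ᵥ w)) + (-b)) := by rw [← heq]
      _ ≤ nrm2 (b + Gᵀ *ᵥ (G *ᵥ w)) + nrm2 (-b) := nrm2_add_le _ _
      _ ≤ nrm2 b + nrm2 b := by rw [nrm2_neg]; linarith
      _ = 2 * nrm2 b := by ring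
  have hcoer : lam * nrm2 w ^ 2 ≤ w ⬝ᵥ (Gᵀ *ᵥ (G *ᵥ w)) := by
    have h := hGG.dotProduct_mulVec_nonneg w
    have hstar : (star w : Fin m → ℝ) = w := by simp
    rw [hstar, Matrix.sub_mulVec, Matrix.smul_mulVec, Matrix.one_mulVec,
      dotProduct_sub, dotProduct_smul, ← Matrix.mulVec_mulVec] at h
    have hww : w ⬝ᵥ w = nrm2 w ^ 2 := by
      rw [nrm2_sq]; simp [dotProduct, sq]
    rw [hww, smul_eq_mul] at h
    linarith
  have hwb : nrm2 w ≤ 2 * nrm2 b / lam := by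
    have hcs : w ⬝ᵥ (Gᵀ *ᵥ (G *ᵥ w)) ≤ nrm2 w * (2 * nrm2 b) :=
      (dot_le_nrm2 _ _).trans (by nlinarith [nrm2_nonneg w, hGGw])
    rcases eq_or_lt_of_le (nrm2_nonneg w) with h0 | h0
    · rw [← h0]; positivity
    · rw [le_div_iff₀ hlam]
      nlinarith
  have hGw : nrm2 (G *ᵥ w) ≤ κgc * (2 * nrm2 b / lam) :=
    (hGnorm w).trans (mul_le_mul_of_nonneg_left hwb hκgc.le)
  have horth : nrm2 (u + G *ᵥ w) ^ 2 = nrm2 u ^ 2 + nrm2 (G *ᵥ w) ^ 2 := by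
    have hdot : ∑ i, u i * (G *ᵥ w) i = 0 := by
      have h1 : u ⬝ᵥ (G *ᵥ w) = (Gᵀ *ᵥ u) ⬝ᵥ w := by
        rw [Matrix.dotProduct_mulVec]
        try rw [Matrix.mulVec_transpose]
      have := h1.trans (by rw [hfeas.1]; try simp)
      simpa [dotProduct] using this
    rw [nrm2_sq, nrm2_sq, nrm2_sq]
    have expand : ∀ i, (u i + (G *ᵥ w) i) ^ 2
        = u i ^ 2 + 2 * (u i * (G *ᵥ w) i) + (G *ᵥ w) i ^ 2 := fun i => by ring
    simp only [Pi.add_apply, expand, Finset.sum_add_distrib, ← Finset.mul_sum, hdot]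
    ring
  have hGwnn := nrm2_nonneg (G *ᵥ w)
  have hvnn := nrm2_nonneg (u + G *ᵥ w)
  have hfinal : nrm2 (u + G *ᵥ w) ^ 2 ≤ (4 * κgc ^ 2 / lam ^ 2 + 1 / μ) * κc ^ 2 := by
    have hu2' : nrm2 u ^ 2 ≤ nrm2 b ^ 2 / μ := by
      rw [le_div_iff₀ hμ]; nlinarith
    have hGw2 : nrm2 (G *ᵥ w) ^ 2 ≤ (κgc * (2 * nrm2 b / lam)) ^ 2 :=
      pow_le_pow_left₀ hGwnn hGw 2
    have hbc : nrm2 b ^ 2 ≤ κc ^ 2 := by nlinarith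
    have h1 : (κgc * (2 * nrm2 b / lam)) ^ 2 = 4 * κgc ^ 2 / lam ^ 2 * nrm2 b ^ 2 := by
      field_simp; ring
    rw [horth]
    calc nrm2 u ^ 2 + nrm2 (G *ᵥ w) ^ 2
        ≤ nrm2 b ^ 2 / μ + 4 * κgc ^ 2 / lam ^ 2 * nrm2 b ^ 2 := by
          rw [h1] at hGw2; linarith
      _ = (4 * κgc ^ 2 / lam ^ 2 + 1 / μ) * nrm2 b ^ 2 := by ring
      _ ≤ (4 * κgc ^ 2 / lam ^ 2 + 1 / μ) * κc ^ 2 := by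
          apply mul_le_mul_of_nonneg_left hbc; positivity
  have hle := Real.sqrt_le_sqrt hfinal
  rw [Real.sqrt_sq hvnn] at hle
  calc nrm2 (u + G *ᵥ w) ≤ Real.sqrt ((4 * κgc ^ 2 / lam ^ 2 + 1 / μ) * κc ^ 2) := hle
    _ = Real.sqrt (4 * κgc ^ 2 / lam ^ 2 + 1 / μ) * κc := by
        rw [Real.sqrt_mul (by positivity), Real.sqrt_sq hκc.le]
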